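/- There is no subset S of the E_7 root system containing exactly one root from each antipodal pair such that the sum of the vectors in S is the zero vector. -/
import Mathlib

def rootsE7 : Set (Fin 8 → ℝ) :=
  {v | (∃ i j : Fin 8, i ≠ j ∧ v = Pi.single i 1 - Pi.single j (1 : ℝ)) ∨
    (∃ c : Fin 8 → ℝ, (∀ i, c i = 1 ∨ c i = -1) ∧ (∑ i, c i) = 0 ∧
      v = (1 / 2 : ℝ) • c)}

private noncomputable def gE7 : (Fin 8 → Bool) → (Fin 8 → ℝ) :=
  fun s i => if s i then (1/2 : ℝ) else -1/2

private def UE7 : Finset (Fin 8 → Bool) :=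
  Finset.univ.filter (fun s => (Finset.univ.filter (fun i => s i = true)).card = 4)

noncomputable def TE7 : Finset (Fin 8 → ℝ) := UE7.image gE7

lemma UE7_card : UE7.card = 70 := by decide

lemma gE7_inj : Function.Injective gE7 := by
  intro s t h
  funext i
  have := congrFun h i
  simp only [gE7] at this
  cases hs : s i <;> cases ht : t i <;> simp [hs, ht] at this ⊢ <;> norm_num at this

/-- For a ±1 vector, sum zero iff exactly 4 coordinates equal 1. -/
lemma sum_eq_zero_iff (c : Fin 8 → ℝ) (hc : ∀ i, c i = 1 ∨ c i = -1) :
    (∑ i, c i) = 0 ↔ (Finset.univ.filter (fun i => c i = 1)).card = 4 := by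
  classical
  have e1 : ∑ i ∈ Finset.univ.filter (fun i => c i = 1), c i
      = ((Finset.univ.filter (fun i => c i = 1)).card : ℝ) := by
    rw [Finset.sum_congr rfl (fun i hi => (Finset.mem_filter.mp hi).2), Finset.sum_const]
    simp
  have e2 : ∑ i ∈ Finset.univ.filter (fun i => ¬ c i = 1), c i
      = -((Finset.univ.filter (fun i => ¬ c i = 1)).card : ℝ) := by
    have hval : ∀ i ∈ Finset.univ.filter (fun i => ¬ c i = 1), c i = (-1 : ℝ) := by
      intro i hi
      have h1 := (Finset.mem_filter.mp hi).2
      rcases hc i with h | h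
      · exact absurd h h1
      · exact h
    rw [Finset.sum_congr rfl hval, Finset.sum_const]
    simp
  have hsplit : ∑ i, c i =
      ((Finset.univ.filter (fun i => c i = 1)).card : ℝ)
        - ((Finset.univ.filter (fun i => ¬ c i = 1)).card : ℝ) := by
    rw [← Finset.sum_filter_add_sum_filter_not Finset.univ (fun i => c i = 1), e1, e2]
    ring
  have hcard : (Finset.univ.filter (fun i => c i = 1)).card
      + (Finset.univ.filter (fun i => ¬ c i = 1)).card = 8 := by
    rw [Finset.card_filter_add_card_filter_not]
    simp
  constructor
  · intro h
    rw [hsplit] at h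
    have h2 : ((Finset.univ.filter (fun i => c i = 1)).card : ℝ)
        = ((Finset.univ.filter (fun i => ¬ c i = 1)).card : ℝ) := by linarith
    have h3 : (Finset.univ.filter (fun i => c i = 1)).card
        = (Finset.univ.filter (fun i => ¬ c i = 1)).card := by exact_mod_cast h2
    omega
  · intro h
    rw [hsplit, h]
    have h4 : (Finset.univ.filter (fun i => ¬ c i = 1)).card = 4 := by omega
    rw [h4]
    norm_num

lemma mem_TE7 (v : Fin 8 → ℝ) :
    v ∈ TE7 ↔ ∃ c : Fin 8 → ℝ, (∀ i, c i = 1 ∨ c i = -1) ∧ (∑ i, c i) = 0 ∧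
      v = (1 / 2 : ℝ) • c := by
  classical
  constructor
  · intro hv
    obtain ⟨s, hs, rfl⟩ := Finset.mem_image.mp hv
    refine ⟨fun i => if s i then 1 else -1, fun i => by by_cases h : s i <;> simp [h], ?_, ?_⟩
    · rw [sum_eq_zero_iff]
      · have hs' := (Finset.mem_filter.mp hs).2
        convert hs' using 2
        ext i
        simp only [Finset.mem_filter]
        constructor
        · rintro ⟨hi, h2⟩
          refine ⟨hi, ?_⟩
          by_contra h
          simp [h] at h2
          norm_num at h2
        · rintro ⟨hi, h2⟩
          simp [h2]
      · intro i; by_cases h : s i <;> simp [h]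
    · funext i
      simp only [gE7, Pi.smul_apply, smul_eq_mul]
      by_cases h : s i <;> simp [h] <;> norm_num
  · rintro ⟨c, hc, hsum, rfl⟩
    refine Finset.mem_image.mpr ⟨fun i => decide (c i = 1), ?_, ?_⟩
    · refine Finset.mem_filter.mpr ⟨Finset.mem_univ _, ?_⟩
      rw [sum_eq_zero_iff c hc] at hsum
      convert hsum using 2
      ext i
      simp [Finset.mem_filter]
    · funext i
      simp only [gE7, Pi.smul_apply, smul_eq_mul]
      rcases hc i with h | h <;> simp [h] <;> norm_num

lemma neg_mem_TE7 {v : Fin 8 → ℝ} (hv : v ∈ TE7) : -v ∈ TE7 := by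
  rw [mem_TE7] at hv ⊢
  obtain ⟨c, hc, hs, rfl⟩ := hv
  refine ⟨-c, fun i => by rcases hc i with h | h <;> simp [h], by simp [hs], by
    funext i; simp⟩

lemma TE7_fst {v : Fin 8 → ℝ} (hv : v ∈ TE7) : v 0 = 1/2 ∨ v 0 = -1/2 := by
  rw [mem_TE7] at hv
  obtain ⟨c, hc, hs, rfl⟩ := hv
  rcases hc 0 with h | h <;> simp [h] <;> norm_num

lemma TE7_sub : ∀ v ∈ TE7, v ∈ rootsE7 := by
  intro v hv
  exact Or.inr ((mem_TE7 v).mp hv)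

/-- First coordinate of a type (i) root. -/
lemma typeI_fst {v : Fin 8 → ℝ} {i j : Fin 8} (hij : i ≠ j)
    (hv : v = Pi.single i 1 - Pi.single j (1 : ℝ)) :
    v 0 = 0 ∨ v 0 = 1 ∨ v 0 = -1 := by
  subst hv
  by_cases hi : (0 : Fin 8) = i <;> by_cases hj : (0 : Fin 8) = j
  · exact absurd (hi.symm.trans hj) hij
  · right; left; simp [Pi.single_apply, ← hi, Ne.symm hj]
  · right; right; simp [Pi.single_apply, ← hj, Ne.symm hi]
  · left; simp [Pi.single_apply, Ne.symm hi, Ne.symm hj]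

theorem stmt_7 :
    ¬ ∃ S : Finset (Fin 8 → ℝ),
      (∀ v ∈ S, v ∈ rootsE7) ∧
      (∀ v ∈ rootsE7, (v ∈ S ↔ -v ∉ S)) ∧
      ∑ v ∈ S, v = 0 := by
  classical
  rintro ⟨S, hmem, hpair, hsum⟩
  have hfst : ∀ v ∈ S, (v ∈ TE7 ∧ (v 0 = 1/2 ∨ v 0 = -1/2)) ∨
      (v ∉ TE7 ∧ (v 0 = 0 ∨ v 0 = 1 ∨ v 0 = -1)) := by
    intro v hv
    rcases hmem v hv with ⟨i, j, hij, hv'⟩ | hII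
    · right
      refine ⟨fun hT => ?_, typeI_fst hij hv'⟩
      rcases TE7_fst hT with h | h <;> rcases typeI_fst hij hv' with h' | h' | h' <;>
        rw [h] at h' <;> norm_num at h'
    · left
      have hT : v ∈ TE7 := (mem_TE7 v).mpr hII
      exact ⟨hT, TE7_fst hT⟩
  -- pairing: exactly 35 type-II roots are chosen
  have hcardT : TE7.card = 70 := by
    rw [TE7, Finset.card_image_of_injective _ gE7_inj, UE7_card]
  have hsplitT : (TE7.filter (fun v => v ∈ S)).card
      + (TE7.filter (fun v => ¬ v ∈ S)).card = 70 := by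
    rw [Finset.card_filter_add_card_filter_not, hcardT]
  have hbij : (TE7.filter (fun v => ¬ v ∈ S)).card = (TE7.filter (fun v => v ∈ S)).card := by
    apply Finset.card_bij (fun v _ => -v)
    · intro v hv
      obtain ⟨hvT, hvS⟩ := Finset.mem_filter.mp hv
      refine Finset.mem_filter.mpr ⟨neg_mem_TE7 hvT, ?_⟩
      by_contra h
      exact hvS (((hpair v (TE7_sub v hvT)).mpr h))
    · intro a _ b _ h
      exact neg_injective h
    · intro w hw
      obtain ⟨hwT, hwS⟩ := Finset.mem_filter.mp hw
      refine ⟨-w, Finset.mem_filter.mpr ⟨neg_mem_TE7 hwT, ?_⟩, by simp⟩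
      exact (hpair w (TE7_sub w hwT)).mp hwS
  have hS2eq : S.filter (fun v => v ∈ TE7) = TE7.filter (fun v => v ∈ S) := by
    ext v
    simp only [Finset.mem_filter]
    tauto
  have hcardS2 : (S.filter (fun v => v ∈ TE7)).card = 35 := by
    rw [hS2eq]; omega
  -- the sum of first coordinates is zero
  have h0 : ∑ v ∈ S, v 0 = 0 := by
    have := congrFun hsum 0
    rw [Finset.sum_apply] at this
    simpa using this
  rw [← Finset.sum_filter_add_sum_filter_not S (fun v => v ∈ TE7)] at h0
  -- split the type-II part by sign of the first coordinate
  have hAB : ((S.filter (fun v => v ∈ TE7)).filter (fun v => v 0 = 1/2)).card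
      + ((S.filter (fun v => v ∈ TE7)).filter (fun v => ¬ v 0 = 1/2)).card = 35 := by
    rw [Finset.card_filter_add_card_filter_not, hcardS2]
  have hsumA : ∑ v ∈ (S.filter (fun v => v ∈ TE7)).filter (fun v => v 0 = 1/2), v 0
      = (((S.filter (fun v => v ∈ TE7)).filter (fun v => v 0 = 1/2)).card : ℝ) * (1/2) := by
    rw [Finset.sum_congr rfl (fun v hv => (Finset.mem_filter.mp hv).2), Finset.sum_const]
    simp [mul_comm]
  have hsumB : ∑ v ∈ (S.filter (fun v => v ∈ TE7)).filter (fun v => ¬ v 0 = 1/2), v 0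
      = (((S.filter (fun v => v ∈ TE7)).filter (fun v => ¬ v 0 = 1/2)).card : ℝ) * (-(1/2)) := by
    have hval : ∀ v ∈ (S.filter (fun v => v ∈ TE7)).filter (fun v => ¬ v 0 = 1/2),
        v 0 = (-(1/2) : ℝ) := by
      intro v hv
      have h1 := (Finset.mem_filter.mp hv).2
      have h2 := Finset.mem_filter.mp (Finset.mem_filter.mp hv).1
      rcases hfst v h2.1 with ⟨_, hc | hc⟩ | ⟨hT, _⟩
      · exact absurd hc h1
      · rw [hc]; norm_num
      · exact absurd h2.2 hT
    rw [Finset.sum_congr rfl hval, Finset.sum_const]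
    simp [mul_comm]
  have hsum2 : ∑ v ∈ S.filter (fun v => v ∈ TE7), v 0
      = (((S.filter (fun v => v ∈ TE7)).filter (fun v => v 0 = 1/2)).card : ℝ) * (1/2)
        + (((S.filter (fun v => v ∈ TE7)).filter (fun v => ¬ v 0 = 1/2)).card : ℝ) * (-(1/2)) := by
    rw [← Finset.sum_filter_add_sum_filter_not (S.filter (fun v => v ∈ TE7))
      (fun v => v 0 = 1/2), hsumA, hsumB]
  -- the type-I part is an integer
  have hint : ∃ n : ℤ, ∑ v ∈ S.filter (fun v => ¬ v ∈ TE7), v 0 = (n : ℝ) := by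
    have hmem2 : ∑ v ∈ S.filter (fun v => ¬ v ∈ TE7), v 0
        ∈ AddSubgroup.zmultiples (1 : ℝ) := by
      apply sum_mem
      intro v hv
      obtain ⟨hvS, hvT⟩ := Finset.mem_filter.mp hv
      rcases hfst v hvS with ⟨hT, _⟩ | ⟨_, h | h | h⟩
      · exact absurd hT hvT
      · exact AddSubgroup.mem_zmultiples_iff.mpr ⟨0, by simp [h]⟩
      · exact AddSubgroup.mem_zmultiples_iff.mpr ⟨1, by simp [h]⟩
      · exact AddSubgroup.mem_zmultiples_iff.mpr ⟨-1, by simp [h]⟩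
    rw [AddSubgroup.mem_zmultiples_iff] at hmem2
    obtain ⟨n, hn⟩ := hmem2
    exact ⟨n, by simpa using hn.symm⟩
  obtain ⟨n, hn⟩ := hint
  rw [hsum2, hn] at h0
  have key : ((((S.filter (fun v => v ∈ TE7)).filter (fun v => v 0 = 1/2)).card : ℤ)
      - (((S.filter (fun v => v ∈ TE7)).filter (fun v => ¬ v 0 = 1/2)).card : ℤ)
      + 2 * n) = 0 := by
    have h2 : ((((S.filter (fun v => v ∈ TE7)).filter (fun v => v 0 = 1/2)).card : ℝ)
        - (((S.filter (fun v => v ∈ TE7)).filter (fun v => ¬ v 0 = 1/2)).card : ℝ)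
        + 2 * (n : ℝ)) = 0 := by linarith
    exact_mod_cast h2
  generalize hA' : ((S.filter (fun v => v ∈ TE7)).filter (fun v => v 0 = 1/2)).card = a at hAB key
  generalize hB' : ((S.filter (fun v => v ∈ TE7)).filter (fun v => ¬ v 0 = 1/2)).card = b at hAB key
  clear * - hAB key
  omega
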